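/- The SOC absolute value map is nonexpansive: for all x, y ∈ ℝ × ℝ^{n-1}, ‖ |x| − |y| ‖ ≤ ‖x − y‖. -/

import Mathlib

open scoped Classical RealInnerProductSpace

noncomputable section

/-- The "tail" `x₂ ∈ ℝ^{n-1}` of a vector `x = (x₁, x₂) ∈ ℝ × ℝ^{n-1}`,
modelled as `x ∈ ℝ^{n}` via `EuclideanSpace ℝ (Fin (n+1))`. -/
def socTail {n : ℕ} (x : EuclideanSpace ℝ (Fin (n + 1))) : EuclideanSpace ℝ (Fin n) :=
  WithLp.toLp 2 (fun i => x i.succ)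

/-- The second-order cone `K = {(x₁, x₂) ∈ ℝ × ℝ^{n-1} : ‖x₂‖ ≤ x₁}`. -/
def soc (n : ℕ) : Set (EuclideanSpace ℝ (Fin (n + 1))) :=
  {x | ‖socTail x‖ ≤ x 0}

/-- The SOC absolute value `|x|`. -/
def socAbs {n : ℕ} (x : EuclideanSpace ℝ (Fin (n + 1))) :
    EuclideanSpace ℝ (Fin (n + 1)) :=
  if socTail x = 0 then
    WithLp.toLp 2 (fun i => if i = 0 then |x 0| else 0)
  else
    WithLp.toLp 2 (fun i =>
      if i = 0 then (|x 0 - ‖socTail x‖| + |x 0 + ‖socTail x‖|) / 2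
      else ((|x 0 + ‖socTail x‖| - |x 0 - ‖socTail x‖|) / 2) * (x i / ‖socTail x‖))

/-- scalar key inequality -/
lemma socKey (x0 y0 r s t : ℝ) (hr : 0 < r) (hs : 0 < s) (ht : |t| ≤ r * s) :
    x0 * y0 + t ≤ ((|x0 - r| + |x0 + r|) / 2) * ((|y0 - s| + |y0 + s|) / 2)
      + (((|x0 + r| - |x0 - r|) / 2) * ((|y0 + s| - |y0 - s|) / 2)) * (t / (r * s)) := by
  have hrs : (0:ℝ) < r * s := mul_pos hr hs
  set c := t / (r * s) with hc
  have htc : t = c * (r * s) := by rw [hc, div_mul_cancel₀ t hrs.ne']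
  obtain ⟨ht1, ht2⟩ := abs_le.mp ht
  have hc1 : -1 ≤ c := by rw [hc]; rw [le_div_iff₀ hrs]; linarith
  have hc2 : c ≤ 1 := by rw [hc]; rw [div_le_one hrs]; linarith
  rw [htc]
  have h11 : (x0 - r) * (y0 - s) ≤ |x0 - r| * |y0 - s| := by
    rw [← abs_mul]; exact le_abs_self _
  have h22 : (x0 + r) * (y0 + s) ≤ |x0 + r| * |y0 + s| := by
    rw [← abs_mul]; exact le_abs_self _
  have h12 : (x0 - r) * (y0 + s) ≤ |x0 - r| * |y0 + s| := by
    rw [← abs_mul]; exact le_abs_self _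
  have h21 : (x0 + r) * (y0 - s) ≤ |x0 + r| * |y0 - s| := by
    rw [← abs_mul]; exact le_abs_self _
  nlinarith [mul_nonneg (by linarith : (0:ℝ) ≤ 1 + c) (by linarith : (0:ℝ) ≤ |x0 - r| * |y0 - s| - (x0 - r) * (y0 - s)),
    mul_nonneg (by linarith : (0:ℝ) ≤ 1 + c) (by linarith : (0:ℝ) ≤ |x0 + r| * |y0 + s| - (x0 + r) * (y0 + s)),
    mul_nonneg (by linarith : (0:ℝ) ≤ 1 - c) (by linarith : (0:ℝ) ≤ |x0 - r| * |y0 + s| - (x0 - r) * (y0 + s)),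
    mul_nonneg (by linarith : (0:ℝ) ≤ 1 - c) (by linarith : (0:ℝ) ≤ |x0 + r| * |y0 - s| - (x0 + r) * (y0 - s))]

lemma inner_split {n : ℕ} (x y : EuclideanSpace ℝ (Fin (n + 1))) :
    ⟪x, y⟫ = x 0 * y 0 + ⟪socTail x, socTail y⟫ := by
  simp [PiLp.inner_apply, RCLike.inner_apply, Fin.sum_univ_succ, socTail]
  ring

lemma norm_sq_split {n : ℕ} (x : EuclideanSpace ℝ (Fin (n + 1))) :
    ‖x‖ ^ 2 = (x 0) ^ 2 + ‖socTail x‖ ^ 2 := by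
  rw [← real_inner_self_eq_norm_sq, ← real_inner_self_eq_norm_sq, inner_split, sq]

lemma socAbs_zero {n : ℕ} (x : EuclideanSpace ℝ (Fin (n + 1))) (h : socTail x ≠ 0) :
    socAbs x 0 = (|x 0 - ‖socTail x‖| + |x 0 + ‖socTail x‖|) / 2 := by
  simp [socAbs, h]

lemma socAbs_succ {n : ℕ} (x : EuclideanSpace ℝ (Fin (n + 1))) (h : socTail x ≠ 0) (i : Fin n) :
    socAbs x i.succ = ((|x 0 + ‖socTail x‖| - |x 0 - ‖socTail x‖|) / 2) * (x i.succ / ‖socTail x‖) := by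
  simp [socAbs, h, Fin.succ_ne_zero]

lemma socTail_socAbs {n : ℕ} (x : EuclideanSpace ℝ (Fin (n + 1))) (h : socTail x ≠ 0) :
    socTail (socAbs x) = (((|x 0 + ‖socTail x‖| - |x 0 - ‖socTail x‖|) / 2) / ‖socTail x‖) • socTail x := by
  ext i
  show socAbs x i.succ = (((|x 0 + ‖socTail x‖| - |x 0 - ‖socTail x‖|) / 2) / ‖socTail x‖) * x i.succ
  rw [socAbs_succ x h i]
  ring

lemma socAbs_zero' {n : ℕ} (x : EuclideanSpace ℝ (Fin (n + 1))) (h : socTail x = 0) :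
    socAbs x 0 = |x 0| := by simp [socAbs, h]

lemma socTail_socAbs' {n : ℕ} (x : EuclideanSpace ℝ (Fin (n + 1))) (h : socTail x = 0) :
    socTail (socAbs x) = 0 := by
  ext i
  have : socAbs x i.succ = 0 := by simp [socAbs, h, Fin.succ_ne_zero]
  simpa [socTail] using this

lemma socAbs_zero_abs_le {n : ℕ} (x : EuclideanSpace ℝ (Fin (n + 1))) :
    |x 0| ≤ socAbs x 0 := by
  by_cases h : socTail x = 0
  · rw [socAbs_zero' x h]
  · rw [socAbs_zero x h]
    have := abs_add_le (‖socTail x‖ - x 0) (x 0 + ‖socTail x‖)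
    have h2 : |‖socTail x‖ - x 0| = |x 0 - ‖socTail x‖| := abs_sub_comm _ _
    have h3 : 0 ≤ ‖socTail x‖ := norm_nonneg _
    rw [h2] at this
    have h4 : |‖socTail x‖ - x 0 + (x 0 + ‖socTail x‖)| = 2 * ‖socTail x‖ := by
      rw [show ‖socTail x‖ - x 0 + (x 0 + ‖socTail x‖) = 2 * ‖socTail x‖ by ring,
        abs_of_nonneg (by linarith)]
    have h5 := abs_add_le (x 0 - ‖socTail x‖) (x 0 + ‖socTail x‖)
    rw [show x 0 - ‖socTail x‖ + (x 0 + ‖socTail x‖) = 2 * x 0 by ring, abs_mul] at h5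
    have h6 : |(2:ℝ)| = 2 := by norm_num
    rw [h6] at h5
    linarith

lemma inner_socAbs_ge {n : ℕ} (x y : EuclideanSpace ℝ (Fin (n + 1))) :
    ⟪x, y⟫ ≤ ⟪socAbs x, socAbs y⟫ := by
  have key0 : ∀ (u v : EuclideanSpace ℝ (Fin (n + 1))), socTail u = 0 →
      ⟪u, v⟫ ≤ ⟪socAbs u, socAbs v⟫ := by
    intro u v hu
    rw [inner_split, inner_split, hu, socTail_socAbs' u hu, inner_zero_left, inner_zero_left,
      socAbs_zero' u hu]
    have h1 : u 0 * v 0 ≤ |u 0| * |v 0| := by rw [← abs_mul]; exact le_abs_self _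
    have h2 : |u 0| * |v 0| ≤ |u 0| * socAbs v 0 :=
      mul_le_mul_of_nonneg_left (socAbs_zero_abs_le v) (abs_nonneg _)
    linarith
  by_cases hx : socTail x = 0
  · exact key0 x y hx
  by_cases hy : socTail y = 0
  · have h1 := key0 y x hy
    have h2 : ⟪y, x⟫ = ⟪x, y⟫ := real_inner_comm x y
    have h3 : ⟪socAbs y, socAbs x⟫ = ⟪socAbs x, socAbs y⟫ := real_inner_comm (socAbs x) (socAbs y)
    linarith
  -- main case
  rw [inner_split, inner_split, socAbs_zero x hx, socAbs_zero y hy,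
    socTail_socAbs x hx, socTail_socAbs y hy, real_inner_smul_left, real_inner_smul_right]
  set r := ‖socTail x‖ with hrdef
  set s := ‖socTail y‖ with hsdef
  have hr : 0 < r := norm_pos_iff.mpr hx
  have hs : 0 < s := norm_pos_iff.mpr hy
  set t := ⟪socTail x, socTail y⟫ with htdef
  have ht : |t| ≤ r * s := abs_real_inner_le_norm _ _
  have := socKey (x 0) (y 0) r s t hr hs ht
  calc x 0 * y 0 + t ≤ _ := this
    _ = _ := by field_simp

lemma norm_sq_socAbs {n : ℕ} (x : EuclideanSpace ℝ (Fin (n + 1))) :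
    ‖socAbs x‖ ^ 2 = ‖x‖ ^ 2 := by
  by_cases hx : socTail x = 0
  · rw [norm_sq_split, norm_sq_split, socTail_socAbs' x hx, hx, socAbs_zero' x hx, sq_abs]
  · rw [norm_sq_split, norm_sq_split, socTail_socAbs x hx, socAbs_zero x hx, norm_smul]
    set r := ‖socTail x‖ with hrdef
    have hr : 0 < r := norm_pos_iff.mpr hx
    have h1 : ‖((|x 0 + r| - |x 0 - r|) / 2) / r‖ = |(|x 0 + r| - |x 0 - r|) / 2| / r := by
      rw [Real.norm_eq_abs, abs_div, abs_of_pos hr]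
    rw [h1]
    have h2 : (|(|x 0 + r| - |x 0 - r|) / 2| / r * r) ^ 2 = ((|x 0 + r| - |x 0 - r|) / 2) ^ 2 := by
      rw [div_mul_cancel₀ _ hr.ne', sq_abs]
    rw [h2]
    have e1 : |x 0 - r| ^ 2 = (x 0 - r) ^ 2 := sq_abs _
    have e2 : |x 0 + r| ^ 2 = (x 0 + r) ^ 2 := sq_abs _
    nlinarith [e1, e2]

/-- The SOC absolute value map is nonexpansive. -/
theorem socAbs_nonexpansive (n : ℕ) (x y : EuclideanSpace ℝ (Fin (n + 1))) :
    ‖socAbs x - socAbs y‖ ≤ ‖x - y‖ := by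
  have h1 : ‖socAbs x - socAbs y‖ ^ 2 ≤ ‖x - y‖ ^ 2 := by
    rw [norm_sub_sq_real, norm_sub_sq_real, norm_sq_socAbs, norm_sq_socAbs]
    have := inner_socAbs_ge x y
    linarith
  nlinarith [norm_nonneg (socAbs x - socAbs y), norm_nonneg (x - y)]
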